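/- Let Z be a measurable space, let P and Q be probability measures on Z, let M = (1/2)·P + (1/2)·Q be their midpoint mixture, and let ℓ : Z → ℝ be a measurable function taking values in an interval [a, a + G] with G ≥ 0. Then for every λ₀ > 0, E_{Q}[ℓ] ≤ E_{P}[ℓ] + (1/λ₀)·(KL(P‖M) + KL(Q‖M)) + (λ₀/4)·G². -/

import Mathlib

open MeasureTheory
open scoped ENNReal

/-- Kullback–Leibler divergence of `Q` with respect to `P`,
`KL(Q‖P) = ∫ log (dQ/dP) dQ` (meaningful when `Q ≪ P`). -/
noncomputable def klDiv {Z : Type*} [MeasurableSpace Z] (Q P : Measure Z) : ℝ :=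
  ∫ z, Real.log (Q.rnDeriv P z).toReal ∂Q

/-!
Compare both `P` and `Q` with the mixture `M`. For `μ ≪ M`, the Donsker–Varadhan inequality
(nonnegativity of `KL(μ ‖ M tilted by f)`) gives
`t (E_μ ℓ - E_M ℓ) ≤ KL(μ‖M) + log E_M exp (t (ℓ - E_M ℓ))`, and Hoeffding's lemma bounds the
log-moment generating function by `t² G² / 8`. Taking `μ = Q, t = λ₀` and `μ = P, t = -λ₀` and
adding the two inequalities gives the claim. Since `P, Q ≤ 2 M`, the densities `dP/dM`, `dQ/dM`
are bounded by `2`, so both divergences are finite.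
-/

open Real ProbabilityTheory

lemma klDiv_eq_integral_llr {α : Type*} [MeasurableSpace α] (μ ν : Measure α) :
    klDiv μ ν = ∫ x, llr μ ν x ∂μ :=
  rfl

namespace MeasureTheory

variable {α : Type*} [MeasurableSpace α] {μ ν : Measure α}

lemma Measure.rnDeriv_le_of_le_smul [SigmaFinite ν] {c : ℝ≥0∞} (h : μ ≤ c • ν) :
    μ.rnDeriv ν ≤ᵐ[ν] fun _ ↦ c := by
  refine ae_le_of_forall_setLIntegral_le_of_sigmaFinite (μ.measurable_rnDeriv ν) fun s _ _ ↦ ?_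
  rw [setLIntegral_const]
  exact (Measure.setLIntegral_rnDeriv_le s).trans (h s)

lemma integrable_llr_of_le_smul [IsFiniteMeasure ν] {c : ℝ≥0∞} (hc : c ≠ ∞) (h : μ ≤ c • ν) :
    Integrable (llr μ ν) μ := by
  have : IsFiniteMeasure μ :=
    ⟨(h Set.univ).trans_lt (ENNReal.mul_lt_top hc.lt_top (measure_lt_top ν _))⟩
  obtain ⟨B, hB⟩ := isCompact_Icc.exists_bound_of_continuousOn
    (Real.continuous_mul_log.continuousOn (s := Set.Icc 0 c.toReal))
  refine (integrable_rnDeriv_mul_log_iff (Measure.absolutelyContinuous_of_le_smul h)).mp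
    (Integrable.of_bound (by fun_prop) B ?_)
  filter_upwards [Measure.rnDeriv_le_of_le_smul h] with x hx
  exact hB _ ⟨ENNReal.toReal_nonneg, ENNReal.toReal_mono hc hx⟩

lemma integral_sub_log_integral_exp_le_integral_llr [IsProbabilityMeasure μ]
    [IsProbabilityMeasure ν] {f : α → ℝ} (hμν : μ ≪ ν) (h_int : Integrable (llr μ ν) μ)
    (hfμ : Integrable f μ) (hfν : Integrable (fun x ↦ exp (f x)) ν) :
    ∫ x, f x ∂μ - log (∫ x, exp (f x) ∂ν) ≤ ∫ x, llr μ ν x ∂μ := by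
  have := isProbabilityMeasure_tilted hfν
  have hgibbs := InformationTheory.integral_llr_add_sub_measure_univ_nonneg
    (hμν.trans (absolutelyContinuous_tilted hfν)) (integrable_llr_tilted_right hμν hfμ h_int hfν)
  rw [integral_llr_tilted_right hμν hfμ hfν h_int] at hgibbs
  simp only [probReal_univ, add_sub_cancel_right] at hgibbs
  linarith

lemma cgf_sub_integral_le_of_mem_Icc [IsProbabilityMeasure ν] {X : α → ℝ} {a b : ℝ}
    (hX : AEMeasurable X ν) (hb : ∀ᵐ x ∂ν, X x ∈ Set.Icc a b) (t : ℝ) :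
    cgf (fun x ↦ X x - ν[X]) ν t ≤ t ^ 2 * (b - a) ^ 2 / 8 := by
  have hsg := hasSubgaussianMGF_of_mem_Icc hX hb
  rw [cgf, log_le_iff_le_exp (mgf_pos (hsg.integrable_exp_mul t))]
  refine (hsg.mgf_le t).trans_eq ?_
  rw [NNReal.coe_pow, NNReal.coe_div, coe_nnnorm, Real.norm_eq_abs, NNReal.coe_ofNat, div_pow,
    sq_abs]
  ring_nf

lemma mul_integral_sub_integral_le_integral_llr_add [IsProbabilityMeasure μ]
    [IsProbabilityMeasure ν] {X : α → ℝ} {a b : ℝ} (hμν : μ ≪ ν) (h_int : Integrable (llr μ ν) μ)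
    (hX : AEMeasurable X ν) (hb : ∀ᵐ x ∂ν, X x ∈ Set.Icc a b) (t : ℝ) :
    t * (∫ x, X x ∂μ - ∫ x, X x ∂ν) ≤ ∫ x, llr μ ν x ∂μ + t ^ 2 * (b - a) ^ 2 / 8 := by
  have hXμ : Integrable X μ := Integrable.of_mem_Icc a b (hX.mono_ac hμν) (hμν.ae_le hb)
  have hb' : ∀ᵐ x ∂ν, X x - ν[X] ∈ Set.Icc (a - ν[X]) (b - ν[X]) :=
    hb.mono fun _ hx ↦ ⟨sub_le_sub_right hx.1 _, sub_le_sub_right hx.2 _⟩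
  have hdv := integral_sub_log_integral_exp_le_integral_llr (f := fun x ↦ t * (X x - ν[X])) hμν
    h_int ((hXμ.sub (integrable_const _)).const_mul t)
    (integrable_exp_mul_of_mem_Icc (hX.sub_const _) hb')
  rw [integral_const_mul, integral_sub hXμ (integrable_const _), integral_const] at hdv
  simp only [probReal_univ, one_smul] at hdv
  exact (sub_le_iff_le_add.mp hdv).trans
    ((add_le_add_iff_left _).mpr (cgf_sub_integral_le_of_mem_Icc hX hb t))

lemma Measure.two_smul_midpoint (μ ν : Measure α) :
    (2 : ℝ≥0∞) • ((2 : ℝ≥0∞)⁻¹ • μ + (2 : ℝ≥0∞)⁻¹ • ν) = μ + ν := by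
  rw [smul_add, smul_smul, smul_smul, ENNReal.mul_inv_cancel two_ne_zero ENNReal.ofNat_ne_top,
    one_smul, one_smul]

instance Measure.isProbabilityMeasure_midpoint [IsProbabilityMeasure μ] [IsProbabilityMeasure ν] :
    IsProbabilityMeasure ((2 : ℝ≥0∞)⁻¹ • μ + (2 : ℝ≥0∞)⁻¹ • ν) :=
  ⟨by simp [ENNReal.inv_two_add_inv_two]⟩

end MeasureTheory

theorem expectation_change_via_mixture_general
    {Z : Type*} [MeasurableSpace Z] (P Q : Measure Z)
    [IsProbabilityMeasure P] [IsProbabilityMeasure Q]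
    (M : Measure Z) (hM : M = (2 : ℝ≥0∞)⁻¹ • P + (2 : ℝ≥0∞)⁻¹ • Q)
    (ℓ : Z → ℝ) (hℓ : Measurable ℓ) (a G : ℝ)
    (hrange : ∀ z, ℓ z ∈ Set.Icc a (a + G))
    (l₀ : ℝ) (hl₀ : 0 < l₀) :
    ∫ z, ℓ z ∂Q ≤
      (∫ z, ℓ z ∂P) + (1 / l₀) * (klDiv P M + klDiv Q M) + (l₀ / 4) * G ^ 2 := by
  have : IsProbabilityMeasure M := hM ▸ inferInstance
  have hP_le : P ≤ (2 : ℝ≥0∞) • M := by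
    rw [hM, Measure.two_smul_midpoint]; exact Measure.le_add_right le_rfl
  have hQ_le : Q ≤ (2 : ℝ≥0∞) • M := by
    rw [hM, Measure.two_smul_midpoint]; exact Measure.le_add_left le_rfl
  have hbound : ∀ᵐ z ∂M, ℓ z ∈ Set.Icc a (a + G) := .of_forall hrange
  have hQ := mul_integral_sub_integral_le_integral_llr_add
    (Measure.absolutelyContinuous_of_le_smul hQ_le)
    (integrable_llr_of_le_smul ENNReal.ofNat_ne_top hQ_le) hℓ.aemeasurable hbound l₀
  have hP := mul_integral_sub_integral_le_integral_llr_add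
    (Measure.absolutelyContinuous_of_le_smul hP_le)
    (integrable_llr_of_le_smul ENNReal.ofNat_ne_top hP_le) hℓ.aemeasurable hbound (-l₀)
  have hsum : l₀ * (∫ z, ℓ z ∂Q - ∫ z, ℓ z ∂P) ≤
      klDiv P M + klDiv Q M + l₀ ^ 2 * G ^ 2 / 4 := by
    rw [klDiv_eq_integral_llr, klDiv_eq_integral_llr]
    linear_combination hQ + hP
  field_simp
  linarith

/-- Eq. (13): for probability measures `P, Q`, midpoint mixture `M = (1/2) P + (1/2) Q`,
and a measurable loss `ℓ` with values in `[a, a + G]`, for every `λ₀ > 0`,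
`E_Q[ℓ] ≤ E_P[ℓ] + (1/λ₀) (KL(P‖M) + KL(Q‖M)) + (λ₀/4) G²`. -/
theorem expectation_change_via_mixture
    {Z : Type*} [MeasurableSpace Z] (P Q : Measure Z)
    [IsProbabilityMeasure P] [IsProbabilityMeasure Q]
    (M : Measure Z) (hM : M = (2 : ℝ≥0∞)⁻¹ • P + (2 : ℝ≥0∞)⁻¹ • Q)
    (ℓ : Z → ℝ) (hℓ : Measurable ℓ) (a G : ℝ) (hG : 0 ≤ G)
    (hrange : ∀ z, ℓ z ∈ Set.Icc a (a + G))
    (l₀ : ℝ) (hl₀ : 0 < l₀) :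
    ∫ z, ℓ z ∂Q ≤
      (∫ z, ℓ z ∂P) + (1 / l₀) * (klDiv P M + klDiv Q M) + (l₀ / 4) * G ^ 2 :=
  expectation_change_via_mixture_general P Q M hM ℓ hℓ a G hrange l₀ hl₀
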